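/- arXiv:2603.11332 — 7 statements merged into one kernel-verified Lean document; each statement's English description precedes it below -/
import Mathlib

section
/- Let N ≥ 1 and let v ∈ ℝ^N. Suppose that for every index i not in I_max(v) one has v_i ≤ (max_j v_j) − 1. Then for every real c > 0 and every i ∈ {1,…,N}, |softmax(c·v)_i − hardmax(v)_i| ≤ N·e^{−c}. -/
/-!
Shifting by `M = max v`, `softmax (c • v)` is `w / ∑ w` for the weights `w j = exp (c (v j - M))`,
which equal `1` on `I_max v` and, by the gap hypothesis, are at most `e^{-c}` elsewhere. Hence
`∑ w` lies between `|I_max v|` and `|I_max v| + N e^{-c}`, and both cases of hardmax follow from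
`1/K - 1/S ≤ S - K` for `1 ≤ K ≤ S`.
-/

open scoped BigOperators

/-- softmax(v)_i = exp(v_i) / ∑_j exp(v_j). -/
noncomputable def softmax {n : ℕ} (v : Fin n → ℝ) : Fin n → ℝ :=
  fun i => Real.exp (v i) / ∑ j, Real.exp (v j)

open Classical in
/-- hardmax(v)_i = 1/|I_max(v)| if v_i attains the maximum, and 0 otherwise,
where the maximum is expressed as `⨆ j, v j` (the supremum over the finite index type). -/
noncomputable def hardmax {n : ℕ} (v : Fin n → ℝ) : Fin n → ℝ :=
  fun i => if v i = ⨆ j, v j then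
    1 / ((Finset.univ.filter fun j => v j = ⨆ j', v j').card : ℝ)
  else 0

open Finset Real

theorem softmax_eq_div_sum_exp_sub {n : ℕ} (v : Fin n → ℝ) (a : ℝ) (i : Fin n) :
    softmax v i = exp (v i - a) / ∑ j, exp (v j - a) := by
  simp only [softmax, exp_sub, ← sum_div]
  rw [div_div_div_cancel_right₀ (exp_pos a).ne']

theorem inv_sub_inv_le_sub_of_one_le {a b : ℝ} (ha : 1 ≤ a) (hab : a ≤ b) :
    a⁻¹ - b⁻¹ ≤ b - a := by
  rw [inv_sub_inv (by linarith : (0 : ℝ) < a).ne' (by linarith : (0 : ℝ) < b).ne']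
  exact div_le_self (sub_nonneg.2 hab) (by nlinarith)

section Weights

variable {ι : Type*} [Fintype ι] [DecidableEq ι] {w : ι → ℝ} {T : Finset ι} {ε : ℝ}

theorem sum_eq_card_add_sum_compl (h1 : ∀ j ∈ T, w j = 1) :
    ∑ j, w j = #T + ∑ j ∈ Tᶜ, w j := by
  rw [← sum_add_sum_compl T, sum_congr rfl h1, sum_const, nsmul_one]

theorem sum_compl_le_card_mul (hε : ∀ j ∉ T, w j ≤ ε) (hε0 : 0 ≤ ε) :
    ∑ j ∈ Tᶜ, w j ≤ Fintype.card ι * ε :=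
  calc ∑ j ∈ Tᶜ, w j ≤ #Tᶜ • ε := sum_le_card_nsmul _ _ _ fun j hj => hε j (mem_compl.1 hj)
    _ ≤ Fintype.card ι * ε := by
      rw [nsmul_eq_mul]
      gcongr
      exact_mod_cast card_le_univ _

theorem abs_div_sum_sub_ite_le (hT : T.Nonempty) (h1 : ∀ j ∈ T, w j = 1) (h0 : ∀ j, 0 ≤ w j)
    (hε : ∀ j ∉ T, w j ≤ ε) (hε0 : 0 ≤ ε) (i : ι) :
    |w i / ∑ j, w j - if i ∈ T then (#T : ℝ)⁻¹ else 0| ≤ Fintype.card ι * ε := by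
  have hsum := sum_eq_card_add_sum_compl h1
  have hcompl := sum_compl_le_card_mul hε hε0
  have hcompl0 : 0 ≤ ∑ j ∈ Tᶜ, w j := sum_nonneg fun j _ => h0 j
  have hT1 : (1 : ℝ) ≤ #T := by exact_mod_cast hT.card_pos
  split_ifs with hi
  · rw [h1 i hi, one_div, abs_sub_comm, abs_of_nonneg]
    · calc (#T : ℝ)⁻¹ - (∑ j, w j)⁻¹ ≤ ∑ j, w j - #T :=
            inv_sub_inv_le_sub_of_one_le hT1 (by linarith)
        _ ≤ Fintype.card ι * ε := by linarith
    · exact sub_nonneg.2 (inv_anti₀ (by positivity) (by linarith))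
  · have hι : (1 : ℝ) ≤ Fintype.card ι := by exact_mod_cast Fintype.card_pos_iff.2 ⟨i⟩
    rw [sub_zero, abs_of_nonneg (div_nonneg (h0 i) (sum_nonneg fun j _ => h0 j))]
    calc w i / ∑ j, w j ≤ w i := div_le_self (h0 i) (by linarith)
      _ ≤ ε := hε i hi
      _ ≤ Fintype.card ι * ε := le_mul_of_one_le_left hε0 hι

end Weights

theorem softmax_approx_hardmax_general {N : ℕ} (v : Fin N → ℝ)
    (hgap : ∀ i : Fin N, v i ≠ (⨆ j, v j) → v i ≤ (⨆ j, v j) - 1) :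
    ∀ c : ℝ, 0 < c → ∀ i : Fin N,
      |softmax (c • v) i - hardmax v i| ≤ (N : ℝ) * Real.exp (-c) := by
  classical
  intro c hc i
  set M := ⨆ j, v j
  set T := univ.filter fun j => v j = M
  have hT : T.Nonempty := by
    have : Nonempty (Fin N) := ⟨i⟩
    obtain ⟨j, hj⟩ := exists_eq_ciSup_of_finite (f := v)
    exact ⟨j, mem_filter.2 ⟨mem_univ j, hj⟩⟩
  have hw_off : ∀ j ∉ T, exp (c * v j - c * M) ≤ exp (-c) := fun j hj => by
    have := hgap j fun h => hj (mem_filter.2 ⟨mem_univ j, h⟩)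
    exact exp_le_exp.2 (by nlinarith)
  have hsoft : softmax (c • v) i = exp (c * v i - c * M) / ∑ j, exp (c * v j - c * M) :=
    softmax_eq_div_sum_exp_sub _ (c * M) i
  have hhard : hardmax v i = if i ∈ T then (#T : ℝ)⁻¹ else 0 := by
    simp [hardmax, T, M]
  have hw1 : ∀ j ∈ T, exp (c * v j - c * M) = 1 := fun j hj => by
    rw [(mem_filter.1 hj).2, sub_self, exp_zero]
  rw [hsoft, hhard]
  simpa only [Fintype.card_fin] using
    abs_div_sum_sub_ite_le hT hw1 (fun j => (exp_pos _).le) hw_off (exp_pos _).le i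

/-- If every non-maximal entry of `v` is at most the maximum minus 1, then for every `c > 0`
and every index `i`, `|softmax(c • v)_i - hardmax(v)_i| ≤ N · e^{-c}`. -/
theorem softmax_approx_hardmax {N : ℕ} (hN : 1 ≤ N) (v : Fin N → ℝ)
    (hgap : ∀ i : Fin N, v i ≠ (⨆ j, v j) → v i ≤ (⨆ j, v j) - 1) :
    ∀ c : ℝ, 0 < c → ∀ i : Fin N,
      |softmax (c • v) i - hardmax v i| ≤ (N : ℝ) * Real.exp (-c) :=
  softmax_approx_hardmax_general v hgap
end

section
/- Let N, m ≥ 1, let A ∈ ℝ^{N×N} be a matrix such that for every row i and every column index i' not in I_max(A_i) one has A_{i,i'} ≤ (max_{i''} A_{i,i''}) − 1, and let V ∈ ℝ^{N×m} be a matrix with all entries in {0,1,2}. Then for every real c > 0, every entry of the matrix softmax(c·A)·V − hardmax(A)·V has absolute value at most 2·N²·e^{−c}. In particular, taking c = Θ(log N) makes the entrywise error an arbitrarily small inverse polynomial in N. -/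
/-!
Off the maximal entries of a row `v`, the gap gives `softmax(c·v)_i ≤ e^{c(v_i - max v)} ≤ e^{-c}`.
On the maximal entries softmax is constant, and their total mass lies between `1 - N e^{-c}`
and `1`, so each of them is within `N e^{-c}` of `1/|I_max(v)|`. Summing these `N` errors
against entries of `V` bounded by `2` gives `2 N² e^{-c}`.
-/

open scoped BigOperators

/-- Row-wise softmax of a matrix. -/
noncomputable def msoftmax {n k : ℕ} (A : Matrix (Fin n) (Fin k) ℝ) :
    Matrix (Fin n) (Fin k) ℝ :=
  Matrix.of fun i => softmax (A i)

/-- Row-wise hardmax of a matrix. -/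
noncomputable def mhardmax {n k : ℕ} (A : Matrix (Fin n) (Fin k) ℝ) :
    Matrix (Fin n) (Fin k) ℝ :=
  Matrix.of fun i => hardmax (A i)

open Finset Real

theorem abs_sub_inv_card_le_of_eq_on {ι : Type*} [Fintype ι] [DecidableEq ι] {p : ι → ℝ}
    {S : Finset ι} {i : ι} {ε : ℝ} (hsum : ∑ j, p j = 1) (hp : ∀ j, 0 ≤ p j) (hi : i ∈ S)
    (hconst : ∀ j ∈ S, p j = p i) (hε : ∀ j ∉ S, p j ≤ ε) :
    |p i - (#S : ℝ)⁻¹| ≤ #Sᶜ * ε := by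
  have hcard : (1 : ℝ) ≤ #S := by exact_mod_cast card_pos.mpr ⟨i, hi⟩
  have hrest : ∑ j ∈ Sᶜ, p j = 1 - #S * p i := by
    rw [← hsum, ← sum_add_sum_compl S, sum_congr rfl hconst, sum_const, nsmul_eq_mul]
    ring
  have hrest_nonneg : 0 ≤ ∑ j ∈ Sᶜ, p j := sum_nonneg fun j _ => hp j
  have hrest_le : ∑ j ∈ Sᶜ, p j ≤ #Sᶜ * ε := by
    simpa only [nsmul_eq_mul] using sum_le_card_nsmul Sᶜ p ε fun j hj => hε j (mem_compl.mp hj)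
  have hdiff : p i - (#S : ℝ)⁻¹ = -(∑ j ∈ Sᶜ, p j) / #S := by
    field_simp
    linarith
  rw [hdiff, abs_div, abs_neg, abs_of_nonneg hrest_nonneg, abs_of_pos (by linarith)]
  exact (div_le_self hrest_nonneg hcard).trans hrest_le

section Vector

variable {n : ℕ}

theorem softmax_nonneg (v : Fin n → ℝ) (i : Fin n) : 0 ≤ softmax v i := by
  unfold softmax
  positivity

theorem sum_softmax [NeZero n] (v : Fin n → ℝ) : ∑ i, softmax v i = 1 := by
  simp only [softmax, ← sum_div]
  exact div_self (sum_pos (fun j _ => exp_pos (v j)) univ_nonempty).ne'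

theorem softmax_le_exp_sub (v : Fin n → ℝ) (i k : Fin n) : softmax v i ≤ exp (v i - v k) := by
  rw [softmax, exp_sub]
  gcongr
  exact single_le_sum (fun j _ => (exp_pos (v j)).le) (mem_univ k)

/-- The index set `I_max(v)` of the maximal entries of `v`. -/
noncomputable def maxIndices (v : Fin n → ℝ) : Finset (Fin n) :=
  univ.filter fun j => v j = ⨆ j', v j'

@[simp]
theorem mem_maxIndices {v : Fin n → ℝ} {i : Fin n} : i ∈ maxIndices v ↔ v i = ⨆ j, v j := by
  simp [maxIndices]

theorem hardmax_of_mem {v : Fin n → ℝ} {i : Fin n} (hi : i ∈ maxIndices v) :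
    hardmax v i = (#(maxIndices v) : ℝ)⁻¹ := by
  rw [hardmax, if_pos (mem_maxIndices.mp hi), one_div]
  rfl

theorem hardmax_of_not_mem {v : Fin n → ℝ} {i : Fin n} (hi : i ∉ maxIndices v) :
    hardmax v i = 0 :=
  if_neg (mt mem_maxIndices.mpr hi)

theorem abs_softmax_smul_sub_hardmax_le {v : Fin n → ℝ}
    (hgap : ∀ i, v i ≠ ⨆ j, v j → v i ≤ (⨆ j, v j) - 1) {c : ℝ} (hc : 0 ≤ c) (i : Fin n) :
    |softmax (c • v) i - hardmax v i| ≤ n * exp (-c) := by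
  have : NeZero n := ⟨Fin.pos_iff_nonempty.mpr ⟨i⟩ |>.ne'⟩
  obtain ⟨k, hk⟩ := exists_eq_ciSup_of_finite (f := v)
  have hoff : ∀ j ∉ maxIndices v, softmax (c • v) j ≤ exp (-c) := fun j hj => by
    have hj_gap := hgap j (mt mem_maxIndices.mpr hj)
    refine (softmax_le_exp_sub _ j k).trans (exp_le_exp.mpr ?_)
    simp only [Pi.smul_apply, smul_eq_mul]
    nlinarith
  by_cases hi : i ∈ maxIndices v
  · rw [hardmax_of_mem hi]
    have hconst : ∀ j ∈ maxIndices v, softmax (c • v) j = softmax (c • v) i := fun j hj => by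
      simp only [softmax, Pi.smul_apply, mem_maxIndices.mp hj, mem_maxIndices.mp hi]
    refine (abs_sub_inv_card_le_of_eq_on (sum_softmax _) (softmax_nonneg _) hi hconst
      hoff).trans ?_
    gcongr
    exact_mod_cast (card_le_univ _).trans_eq (Fintype.card_fin n)
  · have hn : (1 : ℝ) ≤ n := by exact_mod_cast NeZero.one_le
    rw [hardmax_of_not_mem hi, sub_zero, abs_of_nonneg (softmax_nonneg _ i)]
    exact (hoff i hi).trans (le_mul_of_one_le_left (exp_pos _).le hn)

end Vector

theorem softmax_attention_approx_hardmax_attention_general {N m : ℕ}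
    (A : Matrix (Fin N) (Fin N) ℝ)
    (hgap : ∀ i i' : Fin N, A i i' ≠ (⨆ i'', A i i'') → A i i' ≤ (⨆ i'', A i i'') - 1)
    (V : Matrix (Fin N) (Fin m) ℝ)
    (hV : ∀ i j, V i j = 0 ∨ V i j = 1 ∨ V i j = 2) :
    ∀ c : ℝ, 0 < c → ∀ (i : Fin N) (j : Fin m),
      |(msoftmax (c • A) * V - mhardmax A * V) i j| ≤ 2 * (N : ℝ) ^ 2 * Real.exp (-c) := by
  intro c hc i j
  have hrow : ∀ k, |softmax ((c • A) i) k - hardmax (A i) k| ≤ N * exp (-c) :=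
    abs_softmax_smul_sub_hardmax_le (hgap i) hc.le
  have hV_le : ∀ k, |V k j| ≤ 2 := fun k => by
    rcases hV k j with h | h | h <;> norm_num [h]
  rw [← Matrix.sub_mul, Matrix.mul_apply]
  calc |∑ k, (msoftmax (c • A) - mhardmax A) i k * V k j|
      ≤ ∑ k, |(msoftmax (c • A) - mhardmax A) i k| * |V k j| := by
        simpa only [abs_mul] using abs_sum_le_sum_abs (fun k => _ * V k j) univ
    _ ≤ ∑ _k : Fin N, N * exp (-c) * 2 :=
        sum_le_sum fun k _ => mul_le_mul (hrow k) (hV_le k) (abs_nonneg _) (by positivity)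
    _ = 2 * (N : ℝ) ^ 2 * exp (-c) := by
        rw [sum_const, card_univ, Fintype.card_fin, nsmul_eq_mul]
        ring

/-- If in every row of `A` each non-maximal entry is at most the row maximum minus 1,
and all entries of `V` lie in {0,1,2}, then for every `c > 0` every entry of
`softmax(c·A)·V − hardmax(A)·V` has absolute value at most `2·N²·e^{-c}`. -/
theorem softmax_attention_approx_hardmax_attention {N m : ℕ} (hN : 1 ≤ N) (hm : 1 ≤ m)
    (A : Matrix (Fin N) (Fin N) ℝ)
    (hgap : ∀ i i' : Fin N, A i i' ≠ (⨆ i'', A i i'') → A i i' ≤ (⨆ i'', A i i'') - 1)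
    (V : Matrix (Fin N) (Fin m) ℝ)
    (hV : ∀ i j, V i j = 0 ∨ V i j = 1 ∨ V i j = 2) :
    ∀ c : ℝ, 0 < c → ∀ (i : Fin N) (j : Fin m),
      |(msoftmax (c • A) * V - mhardmax A * V) i j| ≤ 2 * (N : ℝ) ^ 2 * Real.exp (-c) :=
  softmax_attention_approx_hardmax_attention_general A hgap V hV
end

section
/- Let N, m ≥ 1, A, B ∈ ℝ^{N×m} and D ∈ ℝ^N. Define Q̃, K̃ ∈ ℝ^{(N+1)×m} by letting rows 1,…,N of Q̃ be the rows of A and row N+1 be zero, and similarly K̃ from B. Define V ∈ ℝ^{(N+1)×(N+1)} by V[i,1] = 1 for i ≤ N, V[N+1,1] = 0, V[i,j+1] = 0 for i ≤ N and j ∈ {1,…,N}, and V[N+1,j+1] = D_j for j ∈ {1,…,N}. Set S_i := ∑_{j=1}^N exp((AB^T)_{ij}) for i ≤ N. Then Y := softmax(Q̃K̃^T)·V satisfies: Y[i,1] = S_i/(1+S_i) and Y[i,j+1] = D_j/(1+S_i) for all i ≤ N and j ∈ {1,…,N}; Y[N+1,1] = N/(N+1); and Y[N+1,j+1] = D_j/(N+1)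 for all j ∈ {1,…,N}. -/
open scoped BigOperators

/-- A single softmax attention head computing the normalized row sums of `exp(A·Bᵀ)`:
with `Q̃, K̃` obtained from `A, B` by appending a zero row, and the value matrix `V`
as described, the output `Y = softmax(Q̃·K̃ᵀ)·V` satisfies `Y[i,1] = S_i/(1+S_i)`,
`Y[i,j+1] = D_j/(1+S_i)` for `i ≤ N`, `Y[N+1,1] = N/(N+1)` and `Y[N+1,j+1] = D_j/(N+1)`,
where `S_i = ∑_j exp((A·Bᵀ)_{ij})`. -/
theorem attention_head_row_sums {N m : ℕ} (hN : 1 ≤ N) (hm : 1 ≤ m)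
    (A B : Matrix (Fin N) (Fin m) ℝ) (D : Fin N → ℝ)
    (Qt Kt : Matrix (Fin (N + 1)) (Fin m) ℝ)
    (hQt : ∀ (i : Fin N) (j : Fin m), Qt i.castSucc j = A i j)
    (hQtlast : ∀ j : Fin m, Qt (Fin.last N) j = 0)
    (hKt : ∀ (i : Fin N) (j : Fin m), Kt i.castSucc j = B i j)
    (hKtlast : ∀ j : Fin m, Kt (Fin.last N) j = 0)
    (V : Matrix (Fin (N + 1)) (Fin (N + 1)) ℝ)
    (hV1 : ∀ i : Fin N, V i.castSucc 0 = 1)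
    (hV2 : V (Fin.last N) 0 = 0)
    (hV3 : ∀ (i : Fin N) (j : Fin N), V i.castSucc j.succ = 0)
    (hV4 : ∀ j : Fin N, V (Fin.last N) j.succ = D j)
    (S : Fin N → ℝ)
    (hS : ∀ i, S i = ∑ j, Real.exp ((A * B.transpose) i j))
    (Y : Matrix (Fin (N + 1)) (Fin (N + 1)) ℝ)
    (hY : Y = msoftmax (Qt * Kt.transpose) * V) :
    (∀ i : Fin N, Y i.castSucc 0 = S i / (1 + S i)) ∧
    (∀ (i : Fin N) (j : Fin N), Y i.castSucc j.succ = D j / (1 + S i)) ∧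
    Y (Fin.last N) 0 = (N : ℝ) / ((N : ℝ) + 1) ∧
    (∀ j : Fin N, Y (Fin.last N) j.succ = D j / ((N : ℝ) + 1)) := by
  subst hY
  have hne : Nonempty (Fin N) := ⟨⟨0, hN⟩⟩
  set E := Qt * Kt.transpose with hE
  have hE1 : ∀ (i j : Fin N), E i.castSucc j.castSucc = (A * B.transpose) i j := by
    intro i j
    simp [hE, Matrix.mul_apply, Matrix.transpose_apply, hQt, hKt]
  have hE2 : ∀ i : Fin N, E i.castSucc (Fin.last N) = 0 := by
    intro i
    simp [hE, Matrix.mul_apply, Matrix.transpose_apply, hKtlast]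
  have hE3 : ∀ k, E (Fin.last N) k = 0 := by
    intro k
    simp [hE, Matrix.mul_apply, hQtlast]
  have hSpos : ∀ i, 0 < S i := by
    intro i
    rw [hS]
    exact Finset.sum_pos (fun j _ => Real.exp_pos _) Finset.univ_nonempty
  have hden : ∀ i : Fin N, ∑ k, Real.exp (E i.castSucc k) = S i + 1 := by
    intro i
    rw [Fin.sum_univ_castSucc]
    simp only [hE2, Real.exp_zero, hS]
    congr 1
    exact Finset.sum_congr rfl fun j _ => by rw [hE1]
  have hdenlast : ∑ k, Real.exp (E (Fin.last N) k) = (N : ℝ) + 1 := by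
    simp [hE3, Real.exp_zero]
  have hsoft : ∀ (i : Fin N) (k : Fin (N+1)),
      msoftmax E i.castSucc k = Real.exp (E i.castSucc k) / (S i + 1) := by
    intro i k
    simp [msoftmax, softmax, hden i]
  have hsoftlast : ∀ k : Fin (N+1),
      msoftmax E (Fin.last N) k = 1 / ((N : ℝ) + 1) := by
    intro k
    simp [msoftmax, softmax, hdenlast, hE3]
  have hSne : ∀ i, S i + 1 ≠ 0 := fun i => by
    have := hSpos i; positivity
  have hNne : (N : ℝ) + 1 ≠ 0 := by positivity
  refine ⟨?_, ?_, ?_, ?_⟩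
  · intro i
    rw [Matrix.mul_apply, Fin.sum_univ_castSucc]
    simp only [hsoft, hE2, Real.exp_zero, hV2, mul_zero, add_zero]
    rw [Finset.sum_congr rfl fun j _ => by rw [hV1, mul_one, hE1]]
    rw [← Finset.sum_div, ← hS]
    rw [add_comm 1 (S i)]
  · intro i j
    rw [Matrix.mul_apply, Fin.sum_univ_castSucc]
    simp only [hsoft, hV3, hV4, hE2, Real.exp_zero, mul_zero]
    simp
    rw [add_comm 1 (S i), div_eq_mul_inv, mul_comm]
  · rw [Matrix.mul_apply, Fin.sum_univ_castSucc]
    simp only [hsoftlast, hV2, mul_zero, add_zero]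
    rw [Finset.sum_congr rfl fun i _ => by rw [hV1, mul_one]]
    simp [Finset.sum_const]
    rw [div_eq_mul_inv]
  · intro j
    rw [Matrix.mul_apply, Fin.sum_univ_castSucc]
    simp only [hsoftlast, hV3, hV4, mul_zero]
    simp
    rw [div_eq_mul_inv, mul_comm]
end

section
/- Let N, m, K ≥ 1 and for each k ∈ {1,…,K} let A_k, B_k ∈ ℝ^{N×m} and D_k ∈ ℝ^N. For each k, define Q̃_k, K̃_k ∈ ℝ^{(N+1)×m} by letting rows 1,…,N be the rows of A_k (resp. B_k) and row N+1 be zero, and define V_k ∈ ℝ^{(N+1)×(N+1)} by V_k[i,1] = 1 for i ≤ N, V_k[N+1,1] = 0, V_k[i,j+1] = 0 for i ≤ N, and V_k[N+1,j+1] = D_k[j]. Set S_{ki} := ∑_{j=1}^N exp((A_k B_k^T)_{ij}). Then Y := ∑_{k=1}^K softmax(Q̃_k K̃_k^T)·V_k satisfies: Y[i,1] = ∑_{k=1}^K S_{ki}/(1+S_{ki}) and Y[i,j+1] = ∑_{k=1}^K D_k[j]/(1+S_{ki}) for all i ≤ N and j ∈ {1,…,N}; Y[N+1,1] = KN/(N+1);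 and Y[N+1,j+1] = ∑_{k=1}^K D_k[j]/(N+1). -/
open scoped BigOperators

/-- Summation aggregation of `K` attention heads: with `Q̃_k, K̃_k` obtained from
`A_k, B_k` by appending a zero row, and `V_k` as described, the aggregated output
`Y = ∑_k softmax(Q̃_k·K̃_kᵀ)·V_k` satisfies `Y[i,1] = ∑_k S_{ki}/(1+S_{ki})`,
`Y[i,j+1] = ∑_k D_k[j]/(1+S_{ki})` for `i ≤ N`, `Y[N+1,1] = KN/(N+1)` and
`Y[N+1,j+1] = ∑_k D_k[j]/(N+1)`, where `S_{ki} = ∑_j exp((A_k·B_kᵀ)_{ij})`. -/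
theorem summed_attention_heads_row_sums {N m K : ℕ} (hN : 1 ≤ N) (hm : 1 ≤ m) (hK : 1 ≤ K)
    (A B : Fin K → Matrix (Fin N) (Fin m) ℝ) (D : Fin K → Fin N → ℝ)
    (Qt Kt : Fin K → Matrix (Fin (N + 1)) (Fin m) ℝ)
    (hQt : ∀ (k : Fin K) (i : Fin N) (j : Fin m), Qt k i.castSucc j = A k i j)
    (hQtlast : ∀ (k : Fin K) (j : Fin m), Qt k (Fin.last N) j = 0)
    (hKt : ∀ (k : Fin K) (i : Fin N) (j : Fin m), Kt k i.castSucc j = B k i j)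
    (hKtlast : ∀ (k : Fin K) (j : Fin m), Kt k (Fin.last N) j = 0)
    (V : Fin K → Matrix (Fin (N + 1)) (Fin (N + 1)) ℝ)
    (hV1 : ∀ (k : Fin K) (i : Fin N), V k i.castSucc 0 = 1)
    (hV2 : ∀ k : Fin K, V k (Fin.last N) 0 = 0)
    (hV3 : ∀ (k : Fin K) (i : Fin N) (j : Fin N), V k i.castSucc j.succ = 0)
    (hV4 : ∀ (k : Fin K) (j : Fin N), V k (Fin.last N) j.succ = D k j)
    (S : Fin K → Fin N → ℝ)
    (hS : ∀ k i, S k i = ∑ j, Real.exp ((A k * (B k).transpose) i j))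
    (Y : Matrix (Fin (N + 1)) (Fin (N + 1)) ℝ)
    (hY : Y = ∑ k : Fin K, msoftmax (Qt k * (Kt k).transpose) * V k) :
    (∀ i : Fin N, Y i.castSucc 0 = ∑ k : Fin K, S k i / (1 + S k i)) ∧
    (∀ (i : Fin N) (j : Fin N),
      Y i.castSucc j.succ = ∑ k : Fin K, D k j / (1 + S k i)) ∧
    Y (Fin.last N) 0 = (K : ℝ) * (N : ℝ) / ((N : ℝ) + 1) ∧
    (∀ j : Fin N, Y (Fin.last N) j.succ = ∑ k : Fin K, D k j / ((N : ℝ) + 1)) := by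
  have hrow : ∀ (k : Fin K) (i : Fin N) (j : Fin N),
      (Qt k * (Kt k).transpose) i.castSucc j.castSucc = (A k * (B k).transpose) i j := by
    intro k i j
    simp [Matrix.mul_apply, Matrix.transpose_apply, hQt, hKt]
  have hrowlast : ∀ (k : Fin K) (i : Fin N),
      (Qt k * (Kt k).transpose) i.castSucc (Fin.last N) = 0 := by
    intro k i
    simp [Matrix.mul_apply, Matrix.transpose_apply, hKtlast]
  have hlastrow : ∀ (k : Fin K) (j : Fin (N + 1)),
      (Qt k * (Kt k).transpose) (Fin.last N) j = 0 := by
    intro k j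
    simp [Matrix.mul_apply, hQtlast]
  have hdenom : ∀ (k : Fin K) (i : Fin N),
      ∑ j, Real.exp ((Qt k * (Kt k).transpose) i.castSucc j) = 1 + S k i := by
    intro k i
    rw [Fin.sum_univ_castSucc]
    simp only [hrowlast, Real.exp_zero, hS k i]
    rw [add_comm]
    congr 1
    exact Finset.sum_congr rfl fun j _ => by rw [hrow]
  have hSpos : ∀ (k : Fin K) (i : Fin N), (0:ℝ) < 1 + S k i := by
    intro k i
    have : 0 ≤ S k i := by
      rw [hS]
      exact Finset.sum_nonneg fun j _ => (Real.exp_pos _).le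
    linarith
  have hdenomlast : ∀ (k : Fin K),
      ∑ j, Real.exp ((Qt k * (Kt k).transpose) (Fin.last N) j) = (N:ℝ) + 1 := by
    intro k
    simp [hlastrow]
  refine ⟨?_, ?_, ?_, ?_⟩
  · intro i
    rw [hY, Matrix.sum_apply]
    refine Finset.sum_congr rfl fun k _ => ?_
    rw [Matrix.mul_apply, Fin.sum_univ_castSucc]
    simp only [msoftmax, softmax, Matrix.of_apply, hdenom, hV1, hV2, mul_one, mul_zero,
      add_zero, hrow]
    rw [← Finset.sum_div, ← hS]
  · intro i j
    rw [hY, Matrix.sum_apply]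
    refine Finset.sum_congr rfl fun k _ => ?_
    rw [Matrix.mul_apply, Fin.sum_univ_castSucc]
    simp only [msoftmax, softmax, Matrix.of_apply, hdenom, hV3, hV4, mul_zero,
      Finset.sum_const_zero, zero_add, hrowlast, Real.exp_zero]
    rw [one_div, inv_mul_eq_div]
  · rw [hY, Matrix.sum_apply]
    have : ∀ k : Fin K, (msoftmax (Qt k * (Kt k).transpose) * V k) (Fin.last N) 0
        = (N:ℝ) / ((N:ℝ) + 1) := by
      intro k
      rw [Matrix.mul_apply, Fin.sum_univ_castSucc]
      simp only [msoftmax, softmax, Matrix.of_apply, hdenomlast, hlastrow, Real.exp_zero,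
        hV1, hV2, mul_one, mul_zero, add_zero, Finset.sum_const, Finset.card_univ,
        Fintype.card_fin, nsmul_eq_mul]
      push_cast
      ring
    rw [Finset.sum_congr rfl fun k _ => this k]
    simp [Finset.sum_const, mul_div_assoc]
  · intro j
    rw [hY, Matrix.sum_apply]
    refine Finset.sum_congr rfl fun k _ => ?_
    rw [Matrix.mul_apply, Fin.sum_univ_castSucc]
    simp only [msoftmax, softmax, Matrix.of_apply, hdenomlast, hlastrow, Real.exp_zero,
      hV3, hV4, mul_zero, Finset.sum_const_zero, zero_add]
    rw [one_div, inv_mul_eq_div]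
    norm_num
end

section
/- Let N, K ≥ 1 and let A_k, B_k ∈ ℝ^{N×N} for k ∈ {1,…,K}. Define S_{ki} := ∑_{j=1}^N exp((A_k B_k^T)_{ij}), let f(C) := ∑_{i=1}^N ∑_{k=1}^K S_{ki}(C)/(1 + S_{ki}(C)) with S_{ki}(C) := ∑_{j=1}^N exp((A_k B_k^T)_{ij} + C_k[i,j]), and let g(D) := ∑_{i=1}^N ∑_{k=1}^K D_k[i]/(1 + S_{ki}) for D = (D_1,…,D_K) ∈ (ℝ^N)^K. Then for all k ∈ {1,…,K} and i₀, j₀ ∈ {1,…,N}: ln( ∂f/∂C_k[i₀,j₀] evaluated at C = 0 ) − 2·ln( ∂g/∂D_k[i₀] ) = (A_k B_k^T)_{i₀ j₀}. In particular, the entries of all K matrix products A_k B_k^T are recovered from these partial derivatives. -/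
/-!
By the chain rule, with `d/dx (x / (1 + x)) = (1 + x)⁻²`, the partial derivative of `f` at `0`
in the direction `C_k[i₀, j₀]` is `exp ((A_k B_kᵀ)_{i₀ j₀}) / (1 + S_{k i₀})²`, while `g` is linear
with coefficient `(1 + S_{k i₀})⁻¹` at `D_k[i₀]`. Taking logarithms, the factor `(1 + S_{k i₀})⁻²`
cancels against twice the logarithm of the derivative of `g`.
-/

open Real

section
variable {E : Type*} [NormedAddCommGroup E] [NormedSpace ℝ E] {ι : Type*} [Fintype ι]

theorem hasFDerivAt_sum_exp_add (m : ι → ℝ) (l : ι → E →L[ℝ] ℝ) (x : E) :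
    HasFDerivAt (fun y => ∑ j, exp (m j + l j y)) (∑ j, exp (m j + l j x) • l j) x :=
  HasFDerivAt.fun_sum fun j _ => ((l j).hasFDerivAt.const_add (m j)).exp

end

theorem hasDerivAt_div_one_add {x : ℝ} (hx : 1 + x ≠ 0) :
    HasDerivAt (fun y => y / (1 + y)) ((1 + x) ^ 2)⁻¹ x :=
  ((hasDerivAt_id' x).div ((hasDerivAt_id' x).const_add 1) hx).congr_deriv (by ring)

section
variable {κ ι ι' : Type*} [Fintype κ] [Fintype ι] [Fintype ι'] [DecidableEq κ] [DecidableEq ι]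
  [DecidableEq ι']

theorem fderiv_sum_sum_div_apply (c : κ → ι → ℝ) (k : κ) (i₀ : ι) :
    fderiv ℝ (fun D : κ → ι → ℝ => ∑ i, ∑ k', D k' i / c k' i) 0
      (fun k' i' => if k' = k ∧ i' = i₀ then 1 else 0) = (c k i₀)⁻¹ := by
  let G : (κ → ι → ℝ) →L[ℝ] ℝ :=
    ∑ i, ∑ k', (c k' i)⁻¹ • (ContinuousLinearMap.proj (R := ℝ) i).comp
      (ContinuousLinearMap.proj (φ := fun _ : κ => ι → ℝ) k')
  have hG : (fun D : κ → ι → ℝ => ∑ i, ∑ k', D k' i / c k' i) = G := by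
    ext D
    simp [G, div_eq_inv_mul]
  rw [hG, G.fderiv]
  simp [G, ite_and, Finset.sum_ite_eq']

theorem fderiv_sum_sum_ratio_sum_exp_apply (M : κ → ι → ι' → ℝ) (k : κ) (i₀ : ι) (j₀ : ι') :
    fderiv ℝ (fun C : κ → ι → ι' → ℝ => ∑ i, ∑ k',
        (∑ j, exp (M k' i j + C k' i j)) / (1 + ∑ j, exp (M k' i j + C k' i j))) 0
      (fun k' i' j' => if k' = k ∧ i' = i₀ ∧ j' = j₀ then 1 else 0)
      = exp (M k i₀ j₀) / (1 + ∑ j, exp (M k i₀ j)) ^ 2 := by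
  let coord (k' : κ) (i : ι) (j : ι') : (κ → ι → ι' → ℝ) →L[ℝ] ℝ :=
    (ContinuousLinearMap.proj (φ := fun _ : ι' => ℝ) j).comp
      ((ContinuousLinearMap.proj (φ := fun _ : ι => ι' → ℝ) i).comp
        (ContinuousLinearMap.proj (φ := fun _ : κ => ι → ι' → ℝ) k'))
  have hS (k' : κ) (i : ι) :
      HasFDerivAt (fun C : κ → ι → ι' → ℝ => ∑ j, exp (M k' i j + C k' i j))
        (∑ j, exp (M k' i j) • coord k' i j) 0 := by
    have h := hasFDerivAt_sum_exp_add (M k' i) (coord k' i) 0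
    simp only [map_zero, add_zero] at h
    exact h
  have hF : HasFDerivAt (fun C : κ → ι → ι' → ℝ => ∑ i, ∑ k',
        (∑ j, exp (M k' i j + C k' i j)) / (1 + ∑ j, exp (M k' i j + C k' i j)))
      (∑ i, ∑ k', ((1 + ∑ j, exp (M k' i j)) ^ 2)⁻¹ • ∑ j, exp (M k' i j) • coord k' i j) 0 :=
    HasFDerivAt.fun_sum fun i _ => HasFDerivAt.fun_sum fun k' _ => by
      have hpos : 0 < 1 + ∑ j, exp (M k' i j) := by positivity
      have hq : HasDerivAt (fun y => y / (1 + y)) ((1 + ∑ j, exp (M k' i j)) ^ 2)⁻¹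
          ((fun C : κ → ι → ι' → ℝ => ∑ j, exp (M k' i j + C k' i j)) 0) := by
        simpa using hasDerivAt_div_one_add hpos.ne'
      exact hq.comp_hasFDerivAt 0 (hS k' i)
  rw [hF.fderiv]
  simp [coord, ite_and, Finset.sum_ite_eq', div_eq_inv_mul]
end

theorem log_exp_div_sq_sub_two_mul_log_inv (a : ℝ) {c : ℝ} (hc : c ≠ 0) :
    log (exp a / c ^ 2) - 2 * log c⁻¹ = a := by
  rw [log_div (exp_pos a).ne' (pow_ne_zero 2 hc), log_exp, log_pow, log_inv]
  push_cast
  ring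

theorem matrix_product_recovery_general {N K : ℕ}
    (A B : Fin K → Matrix (Fin N) (Fin N) ℝ)
    (S₀ : Fin K → Fin N → ℝ)
    (hS₀ : ∀ k i, S₀ k i = ∑ j : Fin N, Real.exp ((A k * (B k).transpose) i j))
    (S : Fin K → Fin N → (Fin K → Fin N → Fin N → ℝ) → ℝ)
    (hS : ∀ k i C, S k i C = ∑ j : Fin N,
      Real.exp ((A k * (B k).transpose) i j + C k i j))
    (f : (Fin K → Fin N → Fin N → ℝ) → ℝ)
    (hf : ∀ C, f C = ∑ i : Fin N, ∑ k : Fin K, S k i C / (1 + S k i C))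
    (g : (Fin K → Fin N → ℝ) → ℝ)
    (hg : ∀ D, g D = ∑ i : Fin N, ∑ k : Fin K, D k i / (1 + S₀ k i)) :
    ∀ (k : Fin K) (i₀ j₀ : Fin N),
      Real.log (fderiv ℝ f 0
          (fun k' i' j' => if k' = k ∧ i' = i₀ ∧ j' = j₀ then (1 : ℝ) else 0))
        - 2 * Real.log (fderiv ℝ g 0
          (fun k' i' => if k' = k ∧ i' = i₀ then (1 : ℝ) else 0))
        = (A k * (B k).transpose) i₀ j₀ := by
  intro k i₀ j₀
  have hf' : f = fun C => ∑ i, ∑ k', (∑ j, exp ((A k' * (B k').transpose) i j + C k' i j)) /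
      (1 + ∑ j, exp ((A k' * (B k').transpose) i j + C k' i j)) :=
    funext fun C => by simp only [hf, hS]
  have hg' : g = fun D => ∑ i, ∑ k', D k' i / (1 + ∑ j, exp ((A k' * (B k').transpose) i j)) :=
    funext fun D => by simp only [hg, hS₀]
  rw [hf', hg', fderiv_sum_sum_ratio_sum_exp_apply (fun k => A k * (B k).transpose),
    fderiv_sum_sum_div_apply]
  exact log_exp_div_sq_sub_two_mul_log_inv _ (by positivity)

/-- The recovery identity of the large embedding dimension lower bound: with
`S_{ki} = ∑_j exp((A_k·B_kᵀ)_{ij})`,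
`f(C) = ∑_i ∑_k S_{ki}(C)/(1+S_{ki}(C))` where
`S_{ki}(C) = ∑_j exp((A_k·B_kᵀ)_{ij} + C_k[i,j])`, and
`g(D) = ∑_i ∑_k D_k[i]/(1+S_{ki})`, the entries of each matrix product are recovered as
`ln(∂f/∂C_k[i₀,j₀]|_{C=0}) − 2·ln(∂g/∂D_k[i₀]) = (A_k·B_kᵀ)_{i₀j₀}`.
Partial derivatives are expressed as Fréchet derivatives applied to the standard basis
direction of the corresponding variable. -/
theorem matrix_product_recovery {N K : ℕ} (hN : 1 ≤ N) (hK : 1 ≤ K)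
    (A B : Fin K → Matrix (Fin N) (Fin N) ℝ)
    (S₀ : Fin K → Fin N → ℝ)
    (hS₀ : ∀ k i, S₀ k i = ∑ j : Fin N, Real.exp ((A k * (B k).transpose) i j))
    (S : Fin K → Fin N → (Fin K → Fin N → Fin N → ℝ) → ℝ)
    (hS : ∀ k i C, S k i C = ∑ j : Fin N,
      Real.exp ((A k * (B k).transpose) i j + C k i j))
    (f : (Fin K → Fin N → Fin N → ℝ) → ℝ)
    (hf : ∀ C, f C = ∑ i : Fin N, ∑ k : Fin K, S k i C / (1 + S k i C))
    (g : (Fin K → Fin N → ℝ) → ℝ)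
    (hg : ∀ D, g D = ∑ i : Fin N, ∑ k : Fin K, D k i / (1 + S₀ k i)) :
    ∀ (k : Fin K) (i₀ j₀ : Fin N),
      Real.log (fderiv ℝ f 0
          (fun k' i' j' => if k' = k ∧ i' = i₀ ∧ j' = j₀ then (1 : ℝ) else 0))
        - 2 * Real.log (fderiv ℝ g 0
          (fun k' i' => if k' = k ∧ i' = i₀ then (1 : ℝ) else 0))
        = (A k * (B k).transpose) i₀ j₀ :=
  matrix_product_recovery_general A B S₀ hS₀ S hS f hf g hg
end

section
/- Let N, m, p ≥ 1, Q, K ∈ ℝ^{N×m} and V ∈ ℝ^{N×p}. Define Q', K' ∈ ℝ^{(N+1)×m} by letting rows 1,…,N equal the rows of Q (resp. K) and row N+1 be zero, and define V' ∈ ℝ^{(N+1)×(p+1)} by V'[i,j] = V[i,j] for i ≤ N and j ≤ p, V'[i,p+1] = 0 for i ≤ N, V'[N+1,j] = 0 for j ≤ p, and V'[N+1,p+1] = 1. Set S_i := ∑_{j=1}^N exp((QK^T)_{ij}). Then Y := softmax(Q'K'^T)·V' satisfies: for all i ≤ N and j ≤ p, Y[i,j] = (exp(QK^T)·V)_{ij}/(1+S_i)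 and Y[i,p+1] = 1/(1+S_i); and for all j ≤ p, Y[N+1,j] = (∑_{i'=1}^N V[i',j])/(N+1) and Y[N+1,p+1] = 1/(N+1). Consequently, for all i ≤ N and j ≤ p, Y[i,j]/Y[i,p+1] = (exp(QK^T)·V)_{ij}. -/
open scoped BigOperators

/-- A normalized attention head with one extra token computes denormalized attention
`exp(Q·Kᵀ)·V` up to recoverable normalization factors: with `Q', K'` obtained from
`Q, K` by appending a zero row and `V'` from `V` by appending a zero row and the extra
column `(0,…,0,1)ᵀ`, the output `Y = softmax(Q'·K'ᵀ)·V'` satisfies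
`Y[i,j] = (exp(QKᵀ)V)_{ij}/(1+S_i)`, `Y[i,p+1] = 1/(1+S_i)`,
`Y[N+1,j] = (∑_{i'} V[i',j])/(N+1)`, `Y[N+1,p+1] = 1/(N+1)`, and consequently
`Y[i,j]/Y[i,p+1] = (exp(QKᵀ)V)_{ij}`, where `S_i = ∑_j exp((QKᵀ)_{ij})`. -/
theorem attention_computes_denormalized_attention {N m p : ℕ}
    (hN : 1 ≤ N) (hm : 1 ≤ m) (hp : 1 ≤ p)
    (Q K : Matrix (Fin N) (Fin m) ℝ) (V : Matrix (Fin N) (Fin p) ℝ)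
    (Q' K' : Matrix (Fin (N + 1)) (Fin m) ℝ)
    (hQ' : ∀ (i : Fin N) (j : Fin m), Q' i.castSucc j = Q i j)
    (hQ'last : ∀ j : Fin m, Q' (Fin.last N) j = 0)
    (hK' : ∀ (i : Fin N) (j : Fin m), K' i.castSucc j = K i j)
    (hK'last : ∀ j : Fin m, K' (Fin.last N) j = 0)
    (V' : Matrix (Fin (N + 1)) (Fin (p + 1)) ℝ)
    (hV'1 : ∀ (i : Fin N) (j : Fin p), V' i.castSucc j.castSucc = V i j)
    (hV'2 : ∀ i : Fin N, V' i.castSucc (Fin.last p) = 0)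
    (hV'3 : ∀ j : Fin p, V' (Fin.last N) j.castSucc = 0)
    (hV'4 : V' (Fin.last N) (Fin.last p) = 1)
    (S : Fin N → ℝ)
    (hS : ∀ i, S i = ∑ j, Real.exp ((Q * K.transpose) i j))
    (E : Matrix (Fin N) (Fin N) ℝ)
    (hE : ∀ i j, E i j = Real.exp ((Q * K.transpose) i j))
    (Y : Matrix (Fin (N + 1)) (Fin (p + 1)) ℝ)
    (hY : Y = msoftmax (Q' * K'.transpose) * V') :
    (∀ (i : Fin N) (j : Fin p), Y i.castSucc j.castSucc = (E * V) i j / (1 + S i)) ∧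
    (∀ i : Fin N, Y i.castSucc (Fin.last p) = 1 / (1 + S i)) ∧
    (∀ j : Fin p, Y (Fin.last N) j.castSucc = (∑ i' : Fin N, V i' j) / ((N : ℝ) + 1)) ∧
    Y (Fin.last N) (Fin.last p) = 1 / ((N : ℝ) + 1) ∧
    (∀ (i : Fin N) (j : Fin p),
      Y i.castSucc j.castSucc / Y i.castSucc (Fin.last p) = (E * V) i j) := by
  set A := Q' * K'.transpose with hA
  have hA1 : ∀ (i j : Fin N), A i.castSucc j.castSucc = (Q * K.transpose) i j := by
    intro i j
    simp only [hA, Matrix.mul_apply, Matrix.transpose_apply, hQ', hK']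
  have hA2 : ∀ i : Fin (N + 1), A i (Fin.last N) = 0 := by
    intro i
    simp [hA, Matrix.mul_apply, hK'last]
  have hA3 : ∀ k : Fin (N + 1), A (Fin.last N) k = 0 := by
    intro k
    simp [hA, Matrix.mul_apply, hQ'last]
  -- row denominators
  have hD1 : ∀ i : Fin N, (∑ k, Real.exp (A i.castSucc k)) = 1 + S i := by
    intro i
    rw [Fin.sum_univ_castSucc]
    simp only [hA2, Real.exp_zero, hS]
    rw [add_comm]
    congr 1
    exact Finset.sum_congr rfl fun j _ => by rw [hA1]
  have hD2 : (∑ k, Real.exp (A (Fin.last N) k)) = (N : ℝ) + 1 := by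
    simp [hA3, Real.exp_zero]
  have hSpos : ∀ i : Fin N, (0:ℝ) < 1 + S i := by
    intro i
    have : 0 ≤ S i := by
      rw [hS]; exact Finset.sum_nonneg fun j _ => (Real.exp_pos _).le
    linarith
  have h1 : ∀ (i : Fin N) (j : Fin p),
      Y i.castSucc j.castSucc = (E * V) i j / (1 + S i) := by
    intro i j
    rw [hY]
    simp only [Matrix.mul_apply, msoftmax, Matrix.of_apply, softmax, hD1]
    rw [Fin.sum_univ_castSucc]
    simp only [hV'3, hA3, hV'1, mul_zero, add_zero, Real.exp_zero]
    rw [Finset.sum_div]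
    exact Finset.sum_congr rfl fun k _ => by
      rw [hA1, hE, div_mul_eq_mul_div]
  have h2 : ∀ i : Fin N, Y i.castSucc (Fin.last p) = 1 / (1 + S i) := by
    intro i
    rw [hY]
    simp only [Matrix.mul_apply, msoftmax, Matrix.of_apply, softmax, hD1]
    rw [Fin.sum_univ_castSucc]
    simp [hV'2, hV'4, hA2]
  have h3 : ∀ j : Fin p, Y (Fin.last N) j.castSucc = (∑ i' : Fin N, V i' j) / ((N : ℝ) + 1) := by
    intro j
    rw [hY]
    simp only [Matrix.mul_apply, msoftmax, Matrix.of_apply, softmax, hD2, hA3,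
      Real.exp_zero]
    rw [Fin.sum_univ_castSucc]
    simp only [hV'3, hV'1, mul_zero, add_zero]
    have hone : (∑ _x : Fin (N + 1), (1:ℝ)) = (N : ℝ) + 1 := by
      simp [Finset.sum_const]
    rw [Finset.sum_div]
    exact Finset.sum_congr rfl fun k _ => by rw [one_div_mul_eq_div, hone]
  have h4 : Y (Fin.last N) (Fin.last p) = 1 / ((N : ℝ) + 1) := by
    rw [hY]
    simp only [Matrix.mul_apply, msoftmax, Matrix.of_apply, softmax, hD2, hA3,
      Real.exp_zero]
    rw [Fin.sum_univ_castSucc]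
    simp [hV'2, hV'4]
  refine ⟨h1, h2, h3, h4, fun i j => ?_⟩
  rw [h1, h2]
  have h := (hSpos i).ne'
  field_simp
end

section
/- Let m ≥ 1, let σ : ℝ → ℝ be any function, and suppose there exists c ∈ ℝ with σ(c) ≠ 0. Then there exist matrices W₀, W₁ ∈ ℝ^{(m+1)×m} and W₂ ∈ ℝ^{(m+1)×m} such that for every x ∈ ℝ^m, the gated linear unit map ψ(x) := ( (x,1)·W₀ ⊙ σ((x,1)·W₁), 1 )·W₂ equals x, where σ is applied entrywise, (x,1) ∈ ℝ^{m+1} denotes x with a 1 appended, and ⊙ denotes the entrywise product of vectors. -/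
open Matrix

section AppendRow

variable {R : Type*} {m n : ℕ}

def appendRow (A : Matrix (Fin m) (Fin n) R) (b : Fin n → R) : Matrix (Fin (m + 1)) (Fin n) R :=
  Matrix.of (Fin.snoc (α := fun _ => Fin n → R) A b)

@[simp]
theorem appendRow_castSucc (A : Matrix (Fin m) (Fin n) R) (b : Fin n → R) (i : Fin m) :
    appendRow A b i.castSucc = A i :=
  Fin.snoc_castSucc (α := fun _ => Fin n → R) ..

@[simp]
theorem appendRow_last (A : Matrix (Fin m) (Fin n) R) (b : Fin n → R) :
    appendRow A b (Fin.last m) = b :=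
  Fin.snoc_last (α := fun _ => Fin n → R) ..

theorem vecMul_snoc_appendRow [NonUnitalNonAssocSemiring R] (v : Fin m → R) (t : R)
    (A : Matrix (Fin m) (Fin n) R) (b : Fin n → R) :
    vecMul (Fin.snoc v t) (appendRow A b) = vecMul v A + t • b := by
  ext j
  simp [vecMul, dotProduct, Fin.sum_univ_castSucc]

end AppendRow

theorem glu_mlp_identity_general {m : ℕ} (σ : ℝ → ℝ) (hσ : ∃ c : ℝ, σ c ≠ 0) :
    ∃ (W₀ W₁ : Matrix (Fin (m + 1)) (Fin m) ℝ) (W₂ : Matrix (Fin (m + 1)) (Fin m) ℝ),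
      ∀ x : Fin m → ℝ,
        Matrix.vecMul
          (Fin.snoc
            (fun j => Matrix.vecMul (Fin.snoc x 1) W₀ j *
              σ (Matrix.vecMul (Fin.snoc x 1) W₁ j))
            1)
          W₂ = x := by
  obtain ⟨c, hc⟩ := hσ
  -- The gate is the constant `σ c`, read off the appended `1`; `W₂` undoes this scaling.
  refine ⟨appendRow 1 0, appendRow 0 fun _ => c, appendRow ((σ c)⁻¹ • 1) 0, fun x => ?_⟩
  have hidden : (fun j => vecMul (Fin.snoc x 1) (appendRow 1 0) j *
      σ (vecMul (Fin.snoc x 1) (appendRow 0 fun _ => c) j)) = σ c • x := by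
    ext j
    simp [vecMul_snoc_appendRow, mul_comm]
  rw [hidden, vecMul_snoc_appendRow]
  simp [vecMul_smul, smul_smul, inv_mul_cancel₀ hc]

/-- GLU MLPs with any activation `σ` that is not identically zero can implement the
identity map: there exist weight matrices `W₀, W₁ ∈ ℝ^{(m+1)×m}` and `W₂ ∈ ℝ^{(m+1)×m}`
such that for every `x ∈ ℝ^m`, `((x,1)·W₀ ⊙ σ((x,1)·W₁), 1)·W₂ = x`, where `σ` is
applied entrywise, `(x,1)` denotes `x` with a `1` appended, and `⊙` is the entrywise
product. -/
theorem glu_mlp_identity {m : ℕ} (hm : 1 ≤ m) (σ : ℝ → ℝ) (hσ : ∃ c : ℝ, σ c ≠ 0) :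
    ∃ (W₀ W₁ : Matrix (Fin (m + 1)) (Fin m) ℝ) (W₂ : Matrix (Fin (m + 1)) (Fin m) ℝ),
      ∀ x : Fin m → ℝ,
        Matrix.vecMul
          (Fin.snoc
            (fun j => Matrix.vecMul (Fin.snoc x 1) W₀ j *
              σ (Matrix.vecMul (Fin.snoc x 1) W₁ j))
            1)
          W₂ = x :=
  glu_mlp_identity_general σ hσ
end
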